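/- Let L ⊆ M be fields of characteristic zero with M algebraically closed, and let a(t), b(t) ∈ L[[t]] with ord_t(a − a(0)) = k, ord_t(b) = r, and k − r = n > 0. If s(t) = Σ_{i≥1} σ_i t^i ∈ M[[t]] is a solution of order one of a'(s(t))·s'(t) = n·t^{n−1}·b(s(t)), then σ₁ⁿ ∈ L and σ_i ∈ L(σ₁) for all i > 1, and s is uniquely determined by σ₁. -/

import Mathlib

/-!
Write `R(u) = A(u) u' - n X^(n-1) b(u)` with `A = a'`, which has order `p = k - 1` and leading
coefficient `α = k a_k`; let `β = b_r`. The coefficient of `X^p` in `R(s)` is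
`α σ₁^(p+1) - n β σ₁^r`, so `α σ₁ⁿ = n β` and `σ₁ⁿ ∈ L`. If `u` and `w` have no constant term
and agree up to degree `m ≥ 1`, the coefficient of `X^(p+m)` in `R(u) - R(w)` is
`(α (p+m+1) σ₁^p - n β r σ₁^(r-1)) (u_(m+1) - w_(m+1))`, and when `u` is a solution the relation
above turns the factor into `α σ₁^p (n+m) ≠ 0`. Comparing a solution with its truncation at
degree `m` therefore expresses `σ_(m+1)` rationally over `L` in `σ₁, …, σ_m`, which gives both
`σ_i ∈ L(σ₁)` and uniqueness by induction.
-/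

noncomputable section

variable {M : Type*} [Field M]

/-- composition of formal power series, meaningful when the constant
coefficient of `s` is zero. -/
def pscomp (f s : PowerSeries M) : PowerSeries M :=
  PowerSeries.mk fun n => ∑ k ∈ Finset.range (n + 1),
    PowerSeries.coeff k f * PowerSeries.coeff n (s ^ k)

open PowerSeries Finset

namespace PowerSeries

section CommRing

variable {R : Type*} [CommRing R] {f f' g g' u w : R⟦X⟧} {p q d e m : ℕ}

theorem coeff_add_mul_of_X_pow_dvd (hf : X ^ p ∣ f) (hg : X ^ q ∣ g) :
    coeff (p + q) (f * g) = coeff p f * coeff q g := by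
  obtain ⟨f, rfl⟩ := hf
  obtain ⟨g, rfl⟩ := hg
  have hX (φ : R⟦X⟧) (n : ℕ) : coeff n (X ^ n * φ) = constantCoeff φ := by
    simpa using coeff_X_pow_mul φ n 0
  rw [mul_mul_mul_comm, ← pow_add, hX, hX, hX, map_mul]

theorem X_pow_dvd_mul_sub_mul (hf : X ^ p ∣ f) (hg : X ^ d ∣ g - g') (hf' : X ^ e ∣ f - f')
    (hg' : X ^ q ∣ g') (h : e + q = p + d) : X ^ (p + d) ∣ f * g - f' * g' := by
  rw [show f * g - f' * g' = f * (g - g') + (f - f') * g' by ring]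
  refine dvd_add ?_ ?_
  · rw [pow_add]
    exact mul_dvd_mul hf hg
  · rw [← h, pow_add]
    exact mul_dvd_mul hf' hg'

theorem coeff_mul_sub_mul (hf : X ^ p ∣ f) (hg : X ^ d ∣ g - g') (hf' : X ^ e ∣ f - f')
    (hg' : X ^ q ∣ g') (h : e + q = p + d) :
    coeff (p + d) (f * g - f' * g') =
      coeff p f * coeff d (g - g') + coeff e (f - f') * coeff q g' := by
  rw [show f * g - f' * g' = f * (g - g') + (f - f') * g' by ring, map_add,
    coeff_add_mul_of_X_pow_dvd hf hg, ← h, coeff_add_mul_of_X_pow_dvd hf' hg']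

theorem coeff_eq_of_X_pow_dvd_sub {i : ℕ} (h : X ^ m ∣ u - w) (hi : i < m) :
    coeff i u = coeff i w := by
  rw [← sub_eq_zero, ← map_sub]
  exact X_pow_dvd_iff.mp h i hi

theorem coeff_natCast_mul_X_pow_mul (c : ℕ) (e d : ℕ) (g : R⟦X⟧) :
    coeff (e + d) ((c : R⟦X⟧) * X ^ e * g) = c * coeff d g := by
  rw [mul_assoc, ← map_natCast (C (R := R)), coeff_C_mul, add_comm, coeff_X_pow_mul]

theorem X_pow_dvd_sub_trunc (n : ℕ) (f : R⟦X⟧) : X ^ n ∣ f - (trunc n f : R⟦X⟧) :=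
  ⟨_, sub_eq_of_eq_add (eq_X_pow_mul_shift_add_trunc n f)⟩

theorem coeff_pow_self (hu : X ∣ u) (j : ℕ) : coeff j (u ^ j) = coeff 1 u ^ j := by
  induction j with
  | zero => simp
  | succ j ih =>
    rw [pow_succ, coeff_add_mul_of_X_pow_dvd (pow_dvd_pow_of_dvd hu j) (by rwa [pow_one]), ih,
      pow_succ]

theorem X_pow_dvd_pow_sub_pow (hu : X ∣ u) (hw : X ∣ w) (huw : X ^ (m + 1) ∣ u - w) (j : ℕ) :
    X ^ (j + m) ∣ u ^ j - w ^ j := by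
  induction j with
  | zero => simp
  | succ j ih =>
    rw [pow_succ, pow_succ, show j + 1 + m = j + (m + 1) by ring]
    exact X_pow_dvd_mul_sub_mul (pow_dvd_pow_of_dvd hu j) huw ih (by rwa [pow_one]) (by ring)

theorem coeff_pow_sub_pow (hu : X ∣ u) (hw : X ∣ w) (huw : X ^ (m + 1) ∣ u - w) (hm : 1 ≤ m)
    (j : ℕ) :
    coeff (j + m) (u ^ j - w ^ j) = j * coeff 1 u ^ (j - 1) * coeff (m + 1) (u - w) := by
  have hσ : coeff 1 w = coeff 1 u := (coeff_eq_of_X_pow_dvd_sub huw (by omega)).symm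
  induction j with
  | zero => simp
  | succ j ih =>
    rw [pow_succ, pow_succ, show j + 1 + m = j + (m + 1) by ring,
      coeff_mul_sub_mul (pow_dvd_pow_of_dvd hu j) huw (X_pow_dvd_pow_sub_pow hu hw huw j)
        (by rwa [pow_one]) (by ring), ih, coeff_pow_self hu, hσ]
    rcases j with _ | j <;> push_cast <;> ring

theorem X_pow_dvd_derivative (h : X ^ (m + 1) ∣ f) : X ^ m ∣ d⁄dX R f := by
  rw [X_pow_dvd_iff] at h ⊢
  intro i hi
  rw [coeff_derivative, h (i + 1) (by omega), zero_mul]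

end CommRing

section CoeffsIn

variable {R : Type*} [CommRing R] (K : Subring R) {K' : Subring R} {f : R⟦X⟧}

def withCoeffsIn : Subring R⟦X⟧ := (map K.subtype).range

variable {K}

theorem mem_withCoeffsIn : f ∈ withCoeffsIn K ↔ ∀ i, coeff i f ∈ K := by
  refine ⟨?_, fun h => ⟨mk fun i => ⟨coeff i f, h i⟩, ext fun i => by simp⟩⟩
  rintro ⟨g, rfl⟩ i
  simp

theorem derivative_mem_withCoeffsIn (hf : f ∈ withCoeffsIn K) :
    d⁄dX R f ∈ withCoeffsIn K := by
  rw [mem_withCoeffsIn] at hf ⊢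
  intro i
  rw [coeff_derivative]
  exact K.mul_mem (hf _) (K.add_mem (natCast_mem K i) K.one_mem)

theorem withCoeffsIn_mono (h : K ≤ K') : withCoeffsIn K ≤ withCoeffsIn K' := fun _ hf =>
  mem_withCoeffsIn.mpr fun i => h (mem_withCoeffsIn.mp hf i)

end CoeffsIn

end PowerSeries

section Composition

variable {f u w : M⟦X⟧} {p m : ℕ}

theorem coeff_pscomp (f u : M⟦X⟧) (d : ℕ) :
    coeff d (pscomp f u) = ∑ k ∈ range (d + 1), coeff k f * coeff d (u ^ k) :=
  coeff_mk _ _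

theorem coeff_pscomp_sub_pscomp (f u w : M⟦X⟧) (d : ℕ) :
    coeff d (pscomp f u - pscomp f w) =
      ∑ k ∈ range (d + 1), coeff k f * coeff d (u ^ k - w ^ k) := by
  simp only [map_sub, coeff_pscomp, mul_sub, sum_sub_distrib]

theorem X_pow_dvd_pscomp (hf : X ^ p ∣ f) (u : M⟦X⟧) : X ^ p ∣ pscomp f u := by
  rw [X_pow_dvd_iff] at hf ⊢
  intro d hd
  rw [coeff_pscomp]
  exact sum_eq_zero fun k hk => by
    rw [hf k ((mem_range_succ_iff.mp hk).trans_lt hd), zero_mul]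

theorem coeff_pscomp_of_X_pow_dvd (hf : X ^ p ∣ f) (hu : X ∣ u) :
    coeff p (pscomp f u) = coeff p f * coeff 1 u ^ p := by
  rw [X_pow_dvd_iff] at hf
  rw [coeff_pscomp, sum_eq_single_of_mem p (self_mem_range_succ p), coeff_pow_self hu]
  intro k hk hkp
  rw [hf k ((mem_range_succ_iff.mp hk).lt_of_ne hkp), zero_mul]

theorem X_pow_dvd_pscomp_sub_pscomp (hf : X ^ p ∣ f) (hu : X ∣ u) (hw : X ∣ w)
    (huw : X ^ (m + 1) ∣ u - w) : X ^ (p + m) ∣ pscomp f u - pscomp f w := by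
  rw [X_pow_dvd_iff] at hf ⊢
  intro d hd
  rw [coeff_pscomp_sub_pscomp]
  refine sum_eq_zero fun k _ => ?_
  rcases lt_or_ge k p with hkp | hkp
  · rw [hf k hkp, zero_mul]
  · rw [X_pow_dvd_iff.mp (X_pow_dvd_pow_sub_pow hu hw huw k) d (by omega), mul_zero]

theorem coeff_pscomp_sub_pscomp_of_X_pow_dvd (hf : X ^ p ∣ f) (hu : X ∣ u) (hw : X ∣ w)
    (huw : X ^ (m + 1) ∣ u - w) (hm : 1 ≤ m) :
    coeff (p + m) (pscomp f u - pscomp f w) =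
      coeff p f * (p * coeff 1 u ^ (p - 1) * coeff (m + 1) (u - w)) := by
  rw [X_pow_dvd_iff] at hf
  rw [coeff_pscomp_sub_pscomp, sum_eq_single_of_mem p (by simp),
    coeff_pow_sub_pow hu hw huw hm]
  intro k _ hkp
  rcases lt_or_gt_of_ne hkp with hlt | hgt
  · rw [hf k hlt, zero_mul]
  · rw [X_pow_dvd_iff.mp (X_pow_dvd_pow_sub_pow hu hw huw k) _ (by omega), mul_zero]

theorem pscomp_mem_withCoeffsIn {K : Subring M} {f u : M⟦X⟧} (hf : f ∈ withCoeffsIn K)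
    (hu : u ∈ withCoeffsIn K) : pscomp f u ∈ withCoeffsIn K := by
  rw [mem_withCoeffsIn] at hf ⊢
  intro d
  rw [coeff_pscomp]
  exact K.sum_mem fun k _ =>
    K.mul_mem (hf k) (mem_withCoeffsIn.mp ((withCoeffsIn K).pow_mem hu k) d)

end Composition

section AssociatedEquation

def associatedResidual (A b : M⟦X⟧) (n : ℕ) (u : M⟦X⟧) : M⟦X⟧ :=
  pscomp A u * d⁄dX M u - (n : M⟦X⟧) * X ^ (n - 1) * pscomp b u

variable {A b u w : M⟦X⟧} {n p r m : ℕ}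

theorem coeff_associatedResidual (hA : X ^ p ∣ A) (hb : X ^ r ∣ b) (hp : p = n - 1 + r)
    (hu : X ∣ u) :
    coeff p (associatedResidual A b n u) =
      coeff p A * coeff 1 u ^ (p + 1) - n * (coeff r b * coeff 1 u ^ r) := by
  have hlead := coeff_add_mul_of_X_pow_dvd (X_pow_dvd_pscomp hA u)
    (by simp : X ^ 0 ∣ d⁄dX M u)
  rw [associatedResidual, map_sub, ← add_zero p, hlead, coeff_pscomp_of_X_pow_dvd hA hu,
    coeff_derivative, add_zero, hp, coeff_natCast_mul_X_pow_mul, ← hp,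
    coeff_pscomp_of_X_pow_dvd hb hu]
  ring

theorem coeff_associatedResidual_sub (hA : X ^ p ∣ A) (hb : X ^ r ∣ b) (hp : p = n - 1 + r)
    (hu : X ∣ u) (hw : X ∣ w) (huw : X ^ (m + 1) ∣ u - w) (hm : 1 ≤ m) :
    coeff (p + m) (associatedResidual A b n u - associatedResidual A b n w) =
      (coeff p A * ((p + m + 1) * coeff 1 u ^ p) -
        n * (coeff r b * (r * coeff 1 u ^ (r - 1)))) * coeff (m + 1) (u - w) := by
  have hderiv : X ^ m ∣ d⁄dX M u - d⁄dX M w := map_sub (d⁄dX M) u w ▸ X_pow_dvd_derivative huw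
  have hcomp := coeff_mul_sub_mul (X_pow_dvd_pscomp hA u) hderiv
    (X_pow_dvd_pscomp_sub_pscomp hA hu hw huw) (by simp : X ^ 0 ∣ d⁄dX M w) (add_zero (p + m))
  have hσ : coeff 1 w = coeff 1 u := (coeff_eq_of_X_pow_dvd_sub huw (by omega)).symm
  rw [show associatedResidual A b n u - associatedResidual A b n w =
      (pscomp A u * d⁄dX M u - pscomp A w * d⁄dX M w) -
        (n : M⟦X⟧) * X ^ (n - 1) * (pscomp b u - pscomp b w) by
      simp only [associatedResidual]; ring,
    map_sub, hcomp, coeff_pscomp_of_X_pow_dvd hA hu, ← map_sub, coeff_derivative,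
    coeff_pscomp_sub_pscomp_of_X_pow_dvd hA hu hw huw hm, coeff_derivative, hσ, hp,
    add_assoc, coeff_natCast_mul_X_pow_mul, coeff_pscomp_sub_pscomp_of_X_pow_dvd hb hu hw huw hm,
    ← hp]
  rcases p with _ | p <;> push_cast <;> ring

theorem coeff_mul_pow_eq_of_associatedResidual_eq_zero (hA : X ^ p ∣ A) (hb : X ^ r ∣ b)
    (hn : 0 < n) (hp : p = n - 1 + r) (hu : X ∣ u) (hσ : coeff 1 u ≠ 0)
    (hsol : associatedResidual A b n u = 0) :
    coeff p A * coeff 1 u ^ n = n * coeff r b := by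
  have h := coeff_associatedResidual hA hb hp hu
  rw [hsol, map_zero, eq_comm, sub_eq_zero, show p + 1 = n + r by omega, pow_add] at h
  exact mul_right_cancel₀ (pow_ne_zero r hσ) (by linear_combination h)

theorem coeff_associatedResidual_sub_of_eq_zero (hA : X ^ p ∣ A) (hb : X ^ r ∣ b)
    (hn : 0 < n) (hp : p = n - 1 + r) (hu : X ∣ u) (hσ : coeff 1 u ≠ 0)
    (hsol : associatedResidual A b n u = 0) (hw : X ∣ w) (huw : X ^ (m + 1) ∣ u - w)
    (hm : 1 ≤ m) :
    coeff (p + m) (associatedResidual A b n u - associatedResidual A b n w) =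
      coeff p A * coeff 1 u ^ p * (n + m) * coeff (m + 1) (u - w) := by
  have hrel := coeff_mul_pow_eq_of_associatedResidual_eq_zero hA hb hn hp hu hσ hsol
  have hpc : (p : M) + 1 = n + r := by
    exact_mod_cast congrArg (Nat.cast : ℕ → M) (show p + 1 = n + r by omega)
  rw [coeff_associatedResidual_sub hA hb hp hu hw huw hm]
  congr 1
  rcases r with _ | r
  · linear_combination coeff p A * coeff 1 u ^ p * hpc
  · have hpow : coeff 1 u ^ p = coeff 1 u ^ n * coeff 1 u ^ r := by
      rw [← pow_add]
      congr 1
      omega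
    push_cast at hpc ⊢
    rw [hpow]
    linear_combination coeff p A * coeff 1 u ^ n * coeff 1 u ^ r * hpc +
      ((r : M) + 1) * coeff 1 u ^ r * hrel

theorem associatedResidual_mem_withCoeffsIn {K : Subring M} (hA : A ∈ withCoeffsIn K)
    (hb : b ∈ withCoeffsIn K) (hu : u ∈ withCoeffsIn K) :
    associatedResidual A b n u ∈ withCoeffsIn K := by
  have hX : X ∈ withCoeffsIn K := ⟨X, map_X _⟩
  exact sub_mem (mul_mem (pscomp_mem_withCoeffsIn hA hu) (derivative_mem_withCoeffsIn hu))
    (mul_mem (mul_mem (natCast_mem _ n) (pow_mem hX _)) (pscomp_mem_withCoeffsIn hb hu))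

variable [CharZero M]

theorem coeff_succ_eq_of_associatedResidual_eq_zero (hA : X ^ p ∣ A) (hA0 : coeff p A ≠ 0)
    (hb : X ^ r ∣ b) (hn : 0 < n) (hp : p = n - 1 + r) (hu : X ∣ u) (hσ : coeff 1 u ≠ 0)
    (hsol : associatedResidual A b n u = 0) (hm : 1 ≤ m) :
    coeff (m + 1) u = -coeff (p + m) (associatedResidual A b n (trunc (m + 1) u)) /
      (coeff p A * coeff 1 u ^ p * (n + m)) := by
  have huw := X_pow_dvd_sub_trunc (m + 1) u
  have hw : X ∣ (trunc (m + 1) u : M⟦X⟧) := by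
    simpa using dvd_sub hu ((dvd_pow_self X m.succ_ne_zero).trans huw)
  have h := coeff_associatedResidual_sub_of_eq_zero hA hb hn hp hu hσ hsol hw huw hm
  have hc : (n : M) + m ≠ 0 := by exact_mod_cast (by omega : n + m ≠ 0)
  rw [hsol, zero_sub, map_neg, map_sub, Polynomial.coeff_coe, coeff_trunc, if_neg (by omega),
    sub_zero] at h
  rw [eq_div_iff (mul_ne_zero (mul_ne_zero hA0 (pow_ne_zero p hσ)) hc), h]
  ring

theorem eq_of_associatedResidual_eq_zero (hA : X ^ p ∣ A) (hA0 : coeff p A ≠ 0)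
    (hb : X ^ r ∣ b) (hn : 0 < n) (hp : p = n - 1 + r) (hu : X ∣ u) (hw : X ∣ w)
    (hσ : coeff 1 u ≠ 0) (hσw : coeff 1 w = coeff 1 u)
    (hsolu : associatedResidual A b n u = 0) (hsolw : associatedResidual A b n w = 0) :
    u = w := by
  ext i
  induction i using Nat.strong_induction_on with
  | _ i ih =>
    match i with
    | 0 => rw [coeff_zero_eq_constantCoeff_apply, coeff_zero_eq_constantCoeff_apply,
        X_dvd_iff.mp hu, X_dvd_iff.mp hw]
    | 1 => exact hσw.symm
    | m + 2 =>
      have htrunc : trunc (m + 2) u = trunc (m + 2) w := by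
        ext j
        simp only [coeff_trunc]
        split_ifs with hj
        exacts [ih j hj, rfl]
      rw [coeff_succ_eq_of_associatedResidual_eq_zero hA hA0 hb hn hp hu hσ hsolu (m := m + 1)
          (by omega), coeff_succ_eq_of_associatedResidual_eq_zero hA hA0 hb hn hp hw (hσw ▸ hσ)
          hsolw (by omega), htrunc, hσw]

theorem coeff_mem_of_associatedResidual_eq_zero {K : Subfield M}
    (hAK : A ∈ withCoeffsIn K.toSubring) (hbK : b ∈ withCoeffsIn K.toSubring)
    (hA : X ^ p ∣ A) (hA0 : coeff p A ≠ 0) (hb : X ^ r ∣ b) (hn : 0 < n) (hp : p = n - 1 + r)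
    (hu : X ∣ u) (hσ : coeff 1 u ≠ 0) (hσK : coeff 1 u ∈ K)
    (hsol : associatedResidual A b n u = 0) (i : ℕ) : coeff i u ∈ K := by
  induction i using Nat.strong_induction_on with
  | _ i ih =>
    match i with
    | 0 => rw [coeff_zero_eq_constantCoeff_apply, X_dvd_iff.mp hu]; exact K.zero_mem
    | 1 => exact hσK
    | m + 2 =>
      have htrunc : (trunc (m + 2) u : M⟦X⟧) ∈ withCoeffsIn K.toSubring := by
        refine mem_withCoeffsIn.mpr fun j => ?_
        rw [Polynomial.coeff_coe, coeff_trunc]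
        split_ifs with hj
        exacts [ih j hj, K.zero_mem]
      rw [coeff_succ_eq_of_associatedResidual_eq_zero hA hA0 hb hn hp hu hσ hsol (m := m + 1)
        (by omega)]
      refine K.div_mem (K.neg_mem (mem_withCoeffsIn.mp
        (associatedResidual_mem_withCoeffsIn hAK hbK htrunc) _)) ?_
      exact K.mul_mem (K.mul_mem (mem_withCoeffsIn.mp hAK p) (K.pow_mem hσK p))
        (K.add_mem (natCast_mem K n) (natCast_mem K _))

end AssociatedEquation

theorem associated_equation_solution_coefficients_general
    [CharZero M] (L : Subfield M)
    (a b : PowerSeries M)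
    (ha : ∀ i : ℕ, PowerSeries.coeff i a ∈ L)
    (hb : ∀ i : ℕ, PowerSeries.coeff i b ∈ L)
    (k r n : ℕ)
    (hk : (a - PowerSeries.C (PowerSeries.constantCoeff a)).order = k)
    (hr : b.order = r)
    (hn : (k : ℤ) - r = n) (hnpos : 0 < n)
    (s : PowerSeries M)
    (hs0 : PowerSeries.constantCoeff s = 0)
    (hs1 : PowerSeries.coeff 1 s ≠ 0)
    (hsol : pscomp a.derivativeFun s * s.derivativeFun =
      (n : PowerSeries M) * PowerSeries.X ^ (n - 1) * pscomp b s) :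
    (PowerSeries.coeff 1 s) ^ n ∈ L ∧
    (∀ i : ℕ, 1 < i →
      PowerSeries.coeff i s ∈
        Subfield.closure ((L : Set M) ∪ {PowerSeries.coeff 1 s})) ∧
    (∀ s' : PowerSeries M,
      PowerSeries.constantCoeff s' = 0 →
      pscomp a.derivativeFun s' * s'.derivativeFun =
        (n : PowerSeries M) * PowerSeries.X ^ (n - 1) * pscomp b s' →
      PowerSeries.coeff 1 s' = PowerSeries.coeff 1 s → s' = s) := by
  obtain ⟨p, rfl⟩ : ∃ p, k = p + 1 := ⟨k - 1, by omega⟩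
  have hp : p = n - 1 + r := by omega
  obtain ⟨hk0, hklow⟩ := order_eq_nat.mp hk
  have hderiv : d⁄dX M (a - C (constantCoeff a)) = d⁄dX M a := by simp
  have hA : X ^ p ∣ d⁄dX M a := hderiv ▸ X_pow_dvd_derivative (X_pow_dvd_iff.mpr hklow)
  have hA0 : coeff p (d⁄dX M a) ≠ 0 := by
    rw [← hderiv, coeff_derivative]
    exact mul_ne_zero hk0 (by exact_mod_cast p.succ_ne_zero)
  have hbX : X ^ r ∣ b := X_pow_dvd_iff.mpr (order_eq_nat.mp hr).2
  have hsX : X ∣ s := X_dvd_iff.mpr hs0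
  have hres : associatedResidual (d⁄dX M a) b n s = 0 := sub_eq_zero.mpr hsol
  have hAL : d⁄dX M a ∈ withCoeffsIn L.toSubring :=
    derivative_mem_withCoeffsIn (mem_withCoeffsIn.mpr ha)
  have hbL : b ∈ withCoeffsIn L.toSubring := mem_withCoeffsIn.mpr hb
  refine ⟨?_, fun i _ => ?_, fun s' hs'0 hsol' hσ => ?_⟩
  · have h := coeff_mul_pow_eq_of_associatedResidual_eq_zero hA hbX hnpos hp hsX hs1 hres
    rw [eq_div_of_mul_eq hA0 ((mul_comm _ _).trans h)]
    exact L.div_mem (L.mul_mem (natCast_mem L n) (hb r)) (mem_withCoeffsIn.mp hAL p)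
  · have hLK : L.toSubring ≤ (Subfield.closure ((L : Set M) ∪ {coeff 1 s})).toSubring :=
      fun x hx => Subfield.subset_closure (Or.inl hx)
    exact coeff_mem_of_associatedResidual_eq_zero (withCoeffsIn_mono hLK hAL)
      (withCoeffsIn_mono hLK hbL) hA hA0 hbX hnpos hp hsX hs1
      (Subfield.subset_closure (Or.inr rfl)) hres i
  · exact eq_of_associatedResidual_eq_zero hA hA0 hbX hnpos hp (X_dvd_iff.mpr hs'0) hsX
      (hσ ▸ hs1) hσ.symm (sub_eq_zero.mpr hsol') hres

/-- **Rationality and uniqueness of the solutions of the associated equation.**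
Let `L ⊆ M` be fields of characteristic zero with `M` algebraically closed, and
let `a, b ∈ L[[t]]` with `ord_t(a − a(0)) = k`, `ord_t(b) = r` and
`k − r = n > 0`.  If `s(t) = Σ_{i≥1} σ_i t^i ∈ M[[t]]` is a solution of order
one of `a'(s(t)) · s'(t) = n · t^{n−1} · b(s(t))`, then `σ₁ⁿ ∈ L`,
`σ_i ∈ L(σ₁)` for all `i > 1`, and `s` is uniquely determined by `σ₁`. -/
theorem associated_equation_solution_coefficients
    [IsAlgClosed M] [CharZero M] (L : Subfield M)
    (a b : PowerSeries M)
    (ha : ∀ i : ℕ, PowerSeries.coeff i a ∈ L)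
    (hb : ∀ i : ℕ, PowerSeries.coeff i b ∈ L)
    (k r n : ℕ)
    (hk : (a - PowerSeries.C (PowerSeries.constantCoeff a)).order = k)
    (hr : b.order = r)
    (hn : (k : ℤ) - r = n) (hnpos : 0 < n)
    (s : PowerSeries M)
    (hs0 : PowerSeries.constantCoeff s = 0)
    (hs1 : PowerSeries.coeff 1 s ≠ 0)
    (hsol : pscomp a.derivativeFun s * s.derivativeFun =
      (n : PowerSeries M) * PowerSeries.X ^ (n - 1) * pscomp b s) :
    (PowerSeries.coeff 1 s) ^ n ∈ L ∧
    (∀ i : ℕ, 1 < i →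
      PowerSeries.coeff i s ∈
        Subfield.closure ((L : Set M) ∪ {PowerSeries.coeff 1 s})) ∧
    (∀ s' : PowerSeries M,
      PowerSeries.constantCoeff s' = 0 →
      pscomp a.derivativeFun s' * s'.derivativeFun =
        (n : PowerSeries M) * PowerSeries.X ^ (n - 1) * pscomp b s' →
      PowerSeries.coeff 1 s' = PowerSeries.coeff 1 s → s' = s) :=
  associated_equation_solution_coefficients_general L a b ha hb k r n hk hr hn hnpos s hs0 hs1 hsol
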